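/- (Comparison of rates under the power constraint, used in the proof of Lemma 1.) For every precoder V with 0 < P(V) ≤ P_T one has R(V) ≤ R̃(V); moreover, if P(V) = P_T then R(V) = R̃(V). -/

import Mathlib

open Matrix Finset
open scoped Matrix

/-- Total transmit power `P(V) = Σₖ Re Tr(Vₖ Vₖᴴ)`. -/
noncomputable def totalPower {K Nt d : ℕ}
    (V : Fin K → Matrix (Fin Nt) (Fin d) ℂ) : ℝ :=
  ∑ k : Fin K, (Matrix.trace (V k * (V k)ᴴ)).re

/-- Interference-plus-signal covariance `Σ_{m ∈ S} Hₖ Vₘ Vₘᴴ Hₖᴴ`. -/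
noncomputable def covSum {K Nt Nr d : ℕ}
    (H : Matrix (Fin Nr) (Fin Nt) ℂ) (V : Fin K → Matrix (Fin Nt) (Fin d) ℂ)
    (S : Finset (Fin K)) : Matrix (Fin Nr) (Fin Nr) ℂ :=
  ∑ m ∈ S, H * V m * (V m)ᴴ * Hᴴ

/-- Generic weighted sum-rate with per-user noise levels `τ k` in place of `σₖ²`:
`Σₖ ωₖ [log det(τₖ I + Σₘ Hₖ Vₘ Vₘᴴ Hₖᴴ) − log det(τₖ I + Σ_{m≠k} Hₖ Vₘ Vₘᴴ Hₖᴴ)]`. -/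
noncomputable def sumRateGen {K Nt Nr d : ℕ}
    (H : Fin K → Matrix (Fin Nr) (Fin Nt) ℂ) (ω : Fin K → ℝ) (τ : Fin K → ℝ)
    (V : Fin K → Matrix (Fin Nt) (Fin d) ℂ) : ℝ :=
  ∑ k : Fin K, ω k *
    (Real.log ((τ k : ℂ) • (1 : Matrix (Fin Nr) (Fin Nr) ℂ) + covSum (H k) V Finset.univ).det.re
      - Real.log ((τ k : ℂ) • (1 : Matrix (Fin Nr) (Fin Nr) ℂ)
          + covSum (H k) V (Finset.univ.erase k)).det.re)

/-- The sum-rate `R(V)` of the power-constrained problem. -/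
noncomputable def sumRate {K Nt Nr d : ℕ}
    (H : Fin K → Matrix (Fin Nr) (Fin Nt) ℂ) (ω σ : Fin K → ℝ)
    (V : Fin K → Matrix (Fin Nt) (Fin d) ℂ) : ℝ :=
  sumRateGen H ω (fun k => σ k ^ 2) V

/-- The power-normalized sum-rate `R̃(V)` of the unconstrained problem, in which
`σₖ²` is replaced by `σₖ² P(V)/P_T`. -/
noncomputable def sumRateNorm {K Nt Nr d : ℕ}
    (H : Fin K → Matrix (Fin Nr) (Fin Nt) ℂ) (ω σ : Fin K → ℝ) (PT : ℝ)
    (V : Fin K → Matrix (Fin Nt) (Fin d) ℂ) : ℝ :=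
  sumRateGen H ω (fun k => σ k ^ 2 * totalPower V / PT) V


/-!
Passing from `R` to `R̃` only lowers each user's noise level from `σₖ²` to
`σₖ² P(V)/P_T ≤ σₖ²`, so it suffices that a user's rate `log det (X + D) - log det X`
(`X` = noise plus interference, `D` = own signal covariance) is antitone in `X` for the
Loewner order. With `S = √D` this rate is `log det (1 + S X⁻¹ S)`; inversion is operator
antitone, and `det` is monotone on positive definite matrices because
`det (A + S²) = det A · det (1 + S A⁻¹ S)` and `det (1 + W) ≥ 1` for `W ≥ 0`.
-/

open scoped ComplexOrder MatrixOrder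

namespace Matrix

variable {n : Type*} [Fintype n] {𝕜 : Type*} [RCLike 𝕜]

lemma mul_mul_conjTranspose_mul_conjTranspose_nonneg {m l : Type*} [Fintype m] [Fintype l]
    (H : Matrix n m 𝕜) (W : Matrix m l 𝕜) : 0 ≤ H * W * Wᴴ * Hᴴ := by
  simpa [nonneg_iff_posSemidef, Matrix.mul_assoc] using posSemidef_self_mul_conjTranspose (H * W)

variable [DecidableEq n]

lemma det_add_mul_self {R : Type*} [CommRing R] {P : Matrix n n R} (hP : IsUnit P.det)
    (S : Matrix n n R) : (P + S * S).det = P.det * (1 + S * P⁻¹ * S).det := by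
  have hfactor : P + S * S = P * (1 + P⁻¹ * S * S) := by
    rw [mul_add, mul_one, ← Matrix.mul_assoc, ← Matrix.mul_assoc, mul_nonsing_inv _ hP, one_mul]
  rw [hfactor, det_mul, det_one_add_mul_comm, Matrix.mul_assoc]

lemma IsHermitian.ofReal_re_det {A : Matrix n n 𝕜} (hA : A.IsHermitian) :
    (RCLike.re A.det : 𝕜) = A.det :=
  RCLike.conj_eq_iff_re.mp (by rw [← RCLike.star_def, ← det_conjTranspose, hA.eq])

lemma IsHermitian.re_det_mul {A B : Matrix n n 𝕜} (hA : A.IsHermitian) (hB : B.IsHermitian) :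
    RCLike.re (A.det * B.det) = RCLike.re A.det * RCLike.re B.det := by
  rw [← hA.ofReal_re_det, ← hB.ofReal_re_det, ← RCLike.ofReal_mul, RCLike.ofReal_re,
    RCLike.ofReal_re, RCLike.ofReal_re]

lemma PosDef.re_det_pos {A : Matrix n n 𝕜} (hA : A.PosDef) : 0 < RCLike.re A.det :=
  (RCLike.pos_iff.mp hA.det_pos).1

lemma PosDef.mul_inv_mul_nonneg {A S : Matrix n n 𝕜} (hA : A.PosDef) (hS : 0 ≤ S) :
    0 ≤ S * A⁻¹ * S :=
  conjugate_nonneg_of_nonneg (nonneg_iff_posSemidef.mpr hA.inv.posSemidef) hS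

lemma PosDef.one_add_mul_inv_mul {A S : Matrix n n 𝕜} (hA : A.PosDef) (hS : 0 ≤ S) :
    (1 + S * A⁻¹ * S).PosDef :=
  PosDef.one.add_posSemidef (nonneg_iff_posSemidef.mp (hA.mul_inv_mul_nonneg hS))

lemma one_le_re_det_one_add {W : Matrix n n 𝕜} (hW : 0 ≤ W) : 1 ≤ RCLike.re (1 + W).det := by
  have hH : (1 + W).IsHermitian := (PosSemidef.one.add (nonneg_iff_posSemidef.mp hW)).isHermitian
  have hle : algebraMap ℝ (Matrix n n 𝕜) 1 ≤ 1 + W := by simpa using hW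
  rw [hH.det_eq_prod_eigenvalues, ← RCLike.ofReal_prod, RCLike.ofReal_re]
  exact Finset.one_le_prod fun i _ => (algebraMap_le_iff_le_spectrum hH.isSelfAdjoint).mp hle _
    (hH.eigenvalues_mem_spectrum_real i)

lemma PosDef.re_det_le_re_det {A B : Matrix n n 𝕜} (hA : A.PosDef) (hAB : A ≤ B) :
    RCLike.re A.det ≤ RCLike.re B.det := by
  set S := CFC.sqrt (B - A)
  have hB : B = A + S * S := by
    rw [CFC.sqrt_mul_sqrt_self _ (sub_nonneg.mpr hAB), add_sub_cancel]
  rw [hB, det_add_mul_self hA.det_pos.ne'.isUnit S,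
    hA.isHermitian.re_det_mul (hA.one_add_mul_inv_mul (CFC.sqrt_nonneg _)).isHermitian]
  exact le_mul_of_one_le_right hA.re_det_pos.le
    (one_le_re_det_one_add (hA.mul_inv_mul_nonneg (CFC.sqrt_nonneg _)))

open scoped Matrix.Norms.L2Operator in
lemma PosDef.inv_le_inv {X Y : Matrix n n ℂ} (hX : X.PosDef) (hXY : X ≤ Y) :
    Y⁻¹ ≤ X⁻¹ := by
  simpa only [nonsing_inv_eq_ringInverse] using
    CStarAlgebra.ringInverse_le_ringInverse hXY (isStrictlyPositive_iff_posDef.mpr hX)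

end Matrix

section LogDetGain

variable {n : Type*} [Fintype n] [DecidableEq n]

noncomputable def logDetGain (X D : Matrix n n ℂ) : ℝ :=
  Real.log (X + D).det.re - Real.log X.det.re

lemma logDetGain_eq_log_re_det_one_add {X D : Matrix n n ℂ} (hX : X.PosDef) (hD : 0 ≤ D) :
    logDetGain X D = Real.log (1 + CFC.sqrt D * X⁻¹ * CFC.sqrt D).det.re := by
  set S := CFC.sqrt D
  have hW := hX.one_add_mul_inv_mul (CFC.sqrt_nonneg D)
  have hdet : (X + D).det.re = X.det.re * (1 + S * X⁻¹ * S).det.re := by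
    rw [← CFC.sqrt_mul_sqrt_self D hD, det_add_mul_self hX.det_pos.ne'.isUnit S]
    exact hX.isHermitian.re_det_mul hW.isHermitian
  have hXpos : 0 < X.det.re := hX.re_det_pos
  have hWpos : 0 < (1 + S * X⁻¹ * S).det.re := hW.re_det_pos
  rw [logDetGain, hdet, Real.log_mul hXpos.ne' hWpos.ne', add_sub_cancel_left]

lemma logDetGain_anti {X Y D : Matrix n n ℂ} (hX : X.PosDef) (hXY : X ≤ Y) (hD : 0 ≤ D) :
    logDetGain Y D ≤ logDetGain X D := by
  have hY : Y.PosDef := by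
    simpa using hX.add_posSemidef (nonneg_iff_posSemidef.mp (sub_nonneg.mpr hXY))
  have hS := CFC.sqrt_nonneg D
  have hWY := hY.one_add_mul_inv_mul hS
  have hWY_pos : 0 < (1 + CFC.sqrt D * Y⁻¹ * CFC.sqrt D).det.re := hWY.re_det_pos
  rw [logDetGain_eq_log_re_det_one_add hY hD, logDetGain_eq_log_re_det_one_add hX hD]
  exact Real.log_le_log hWY_pos <| hWY.re_det_le_re_det <|
    add_le_add_right (conjugate_le_conjugate_of_nonneg (hX.inv_le_inv hXY) hS) 1

end LogDetGain

section SumRate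

variable {K Nt Nr d : ℕ}

lemma covSum_nonneg (H : Matrix (Fin Nr) (Fin Nt) ℂ) (V : Fin K → Matrix (Fin Nt) (Fin d) ℂ)
    (S : Finset (Fin K)) : 0 ≤ covSum H V S :=
  sum_nonneg fun m _ => mul_mul_conjTranspose_mul_conjTranspose_nonneg H (V m)

lemma covSum_univ_eq_covSum_erase_add (H : Matrix (Fin Nr) (Fin Nt) ℂ)
    (V : Fin K → Matrix (Fin Nt) (Fin d) ℂ) (k : Fin K) :
    covSum H V univ = covSum H V (univ.erase k) + H * V k * (V k)ᴴ * Hᴴ :=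
  (sum_erase_add _ _ (mem_univ k)).symm

lemma sumRateGen_eq_sum_logDetGain (H : Fin K → Matrix (Fin Nr) (Fin Nt) ℂ) (ω τ : Fin K → ℝ)
    (V : Fin K → Matrix (Fin Nt) (Fin d) ℂ) :
    sumRateGen H ω τ V = ∑ k, ω k * logDetGain ((τ k : ℂ) • 1 + covSum (H k) V (univ.erase k))
      (H k * V k * (V k)ᴴ * (H k)ᴴ) := by
  refine sum_congr rfl fun k _ => ?_
  rw [logDetGain, covSum_univ_eq_covSum_erase_add _ V k, add_assoc]

lemma sumRateGen_anti {H : Fin K → Matrix (Fin Nr) (Fin Nt) ℂ} {ω τ τ' : Fin K → ℝ}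
    (hω : ∀ k, 0 ≤ ω k) (hτ' : ∀ k, 0 < τ' k) (hτ'τ : ∀ k, τ' k ≤ τ k)
    (V : Fin K → Matrix (Fin Nt) (Fin d) ℂ) :
    sumRateGen H ω τ V ≤ sumRateGen H ω τ' V := by
  simp only [sumRateGen_eq_sum_logDetGain]
  refine sum_le_sum fun k _ => mul_le_mul_of_nonneg_left (logDetGain_anti ?_ ?_ ?_) (hω k)
  · exact (PosDef.one.smul (by exact_mod_cast hτ' k)).add_posSemidef
      (nonneg_iff_posSemidef.mp (covSum_nonneg _ _ _))
  · refine add_le_add_left ?_ _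
    rw [le_iff, ← sub_smul]
    exact PosSemidef.one.smul (by simpa using hτ'τ k)
  · exact mul_mul_conjTranspose_mul_conjTranspose_nonneg _ _

end SumRate

theorem sumRate_le_sumRateNorm_of_power_le_general
    (K Nt Nr d : ℕ)
    (H : Fin K → Matrix (Fin Nr) (Fin Nt) ℂ) (ω σ : Fin K → ℝ) (PT : ℝ)
    (hω : ∀ k, 0 < ω k) (hσ : ∀ k, 0 < σ k) (hPT : 0 < PT)
    (V : Fin K → Matrix (Fin Nt) (Fin d) ℂ)
    (hVpos : 0 < totalPower V) (hVle : totalPower V ≤ PT) :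
    sumRate H ω σ V ≤ sumRateNorm H ω σ PT V ∧
    (totalPower V = PT → sumRate H ω σ V = sumRateNorm H ω σ PT V) := by
  have hnoise_pos k : 0 < σ k ^ 2 * totalPower V / PT :=
    div_pos (mul_pos (pow_pos (hσ k) 2) hVpos) hPT
  have hnoise_le k : σ k ^ 2 * totalPower V / PT ≤ σ k ^ 2 := by
    rw [mul_div_assoc]
    exact mul_le_of_le_one_right (sq_nonneg _) ((div_le_one hPT).mpr hVle)
  refine ⟨sumRateGen_anti (fun k => (hω k).le) hnoise_pos hnoise_le V, fun hfull => ?_⟩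
  simp only [sumRate, sumRateNorm, hfull, mul_div_cancel_right₀ _ hPT.ne']

/-- Comparison of rates under the power constraint: for every precoder `V` with
`0 < P(V) ≤ P_T` one has `R(V) ≤ R̃(V)`, with equality when `P(V) = P_T`. -/
theorem sumRate_le_sumRateNorm_of_power_le
    (K Nt Nr d : ℕ) (hK : 1 ≤ K) (hNt : 1 ≤ Nt) (hNr : 1 ≤ Nr) (hd : 1 ≤ d)
    (H : Fin K → Matrix (Fin Nr) (Fin Nt) ℂ) (ω σ : Fin K → ℝ) (PT : ℝ)
    (hω : ∀ k, 0 < ω k) (hσ : ∀ k, 0 < σ k) (hPT : 0 < PT)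
    (V : Fin K → Matrix (Fin Nt) (Fin d) ℂ)
    (hVpos : 0 < totalPower V) (hVle : totalPower V ≤ PT) :
    sumRate H ω σ V ≤ sumRateNorm H ω σ PT V ∧
    (totalPower V = PT → sumRate H ω σ V = sumRateNorm H ω σ PT V) :=
  sumRate_le_sumRateNorm_of_power_le_general K Nt Nr d H ω σ PT hω hσ hPT V hVpos hVle
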